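/- arXiv:2311.08612 — 3 statements merged into one kernel-verified Lean document; each statement's English description precedes it below -/
import Mathlib

section
/- Fix a positive integer L, a natural number R, and V : ℤ × (ℤ/Lℤ) → ℝ with V(x, j) = 0 whenever |x| > R. For all E, k ∈ ℝ, the linear map T₀(E,k) on ℂ^{ℤ/Lℤ} × ℂ^{ℤ/Lℤ} is invertible, and E is an eigenvalue of H(k) if and only if there exists a nonzero vector Ψ ∈ ℂ^{ℤ/Lℤ} × ℂ^{ℤ/Lℤ} such that ∑_{n=0}^{∞} ‖T₀(E,k)ⁿ (T_V(E,k) Ψ)‖² < ∞ and ∑_{n=0}^{∞} ‖(T₀(E,k)⁻¹)ⁿ Ψ‖² < ∞. -/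
open scoped ENNReal BigOperators

noncomputable section

/-- The twisted Laplacian `Δᵏ` on `ℂ^{ℤ/Lℤ}`. -/
def deltaK (L : ℕ) (k : ℝ) (φ : ZMod L → ℂ) : ZMod L → ℂ :=
  fun j => Complex.exp (Complex.I * k) * φ (j + 1) + Complex.exp (-(Complex.I * k)) * φ (j - 1)

/-- The free transfer matrix `T₀(E,k)` on `ℂ^{ℤ/Lℤ} × ℂ^{ℤ/Lℤ}`. -/
def T0 (L : ℕ) (E k : ℝ) (Ψ : (ZMod L → ℂ) × (ZMod L → ℂ)) : (ZMod L → ℂ) × (ZMod L → ℂ) :=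
  (fun j => (E : ℂ) * Ψ.1 j - deltaK L k Ψ.1 j - Ψ.2 j, Ψ.1)

/-- The one-step transfer matrix `T_x(E,k)` through the potential `V` at site `x`. -/
def Tstep (L : ℕ) (E k : ℝ) (V : ℤ × ZMod L → ℝ) (x : ℤ)
    (Ψ : (ZMod L → ℂ) × (ZMod L → ℂ)) : (ZMod L → ℂ) × (ZMod L → ℂ) :=
  (fun j => (E : ℂ) * Ψ.1 j - deltaK L k Ψ.1 j - (V (x, j) : ℂ) * Ψ.1 j - Ψ.2 j, Ψ.1)

/-- The transfer matrix `T_V(E,k) = T_R ∘ T_{R-1} ∘ ⋯ ∘ T_{-R}` across the support of `V`. -/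
def TV (L R : ℕ) (E k : ℝ) (V : ℤ × ZMod L → ℝ)
    (Ψ : (ZMod L → ℂ) × (ZMod L → ℂ)) : (ZMod L → ℂ) × (ZMod L → ℂ) :=
  (List.range (2 * R + 1)).foldl (fun Φ i => Tstep L E k V ((i : ℤ) - (R : ℤ)) Φ) Ψ

/-- The squared Euclidean norm on `ℂ^{ℤ/Lℤ} × ℂ^{ℤ/Lℤ}`. -/
def normSq (L : ℕ) [NeZero L] (Ψ : (ZMod L → ℂ) × (ZMod L → ℂ)) : ℝ :=
  ∑ j : ZMod L, ‖Ψ.1 j‖ ^ 2 + ∑ j : ZMod L, ‖Ψ.2 j‖ ^ 2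

/-!
If `Hψ = Eψ`, the column pairs `Φ x = (ψ(x, ·), ψ(x - 1, ·))` form a two-sided orbit of the
transfer maps, `Φ (x + 1) = T_x (Φ x)`, and conversely every orbit comes from a solution of the
eigenvalue equation. The transfer maps are invertible, so an orbit exists through any prescribed
`Φ (-R) = Ψ` and is determined by it. Outside `[-R, R]` the transfer maps equal `T₀`, hence
`Φ (R + 1 + n) = T₀ⁿ T_V Ψ` and `Φ (-R - n) = T₀⁻ⁿ Ψ`, and `ψ ∈ ℓ²` exactly when `‖Φ x‖²` is
summable along both tails.
-/

open Function

/-- `(u, v) ↦ (A u - v, u)` is the transfer matrix of the recursion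
`u (x + 1) = A (u x) - u (x - 1)`; `T0` and `Tstep` are of this form. -/
def transferEquiv {M : Type*} [AddCommGroup M] (A : M → M) : M × M ≃ M × M where
  toFun p := (A p.1 - p.2, p.1)
  invFun p := (p.2, A p.2 - p.1)
  left_inv p := by simp
  right_inv p := by simp

section Orbit

variable {α : Type*} {f : ℤ → α → α} {Φ Φ' : ℤ → α}

def IsOrbit (f : ℤ → α → α) (Φ : ℤ → α) : Prop :=
  ∀ x, f x (Φ x) = Φ (x + 1)

theorem IsOrbit.eq_of_apply_eq (hf : ∀ x, Injective (f x)) (hΦ : IsOrbit f Φ)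
    (hΦ' : IsOrbit f Φ') (x₀ : ℤ) (h : Φ x₀ = Φ' x₀) : Φ = Φ' := by
  funext x
  induction x using Int.inductionOn' (b := x₀) with
  | zero => exact h
  | succ x _ ih => rw [← hΦ, ← hΦ', ih]
  | pred x _ ih => exact hf (x - 1) (by rw [hΦ, hΦ', sub_add_cancel, ih])

/-- Integer powers of this permutation trace out the orbits of `e`; this is how orbits are shown
to exist. -/
@[simps]
def orbitShift (e : ℤ → Equiv.Perm α) : Equiv.Perm (ℤ × α) where
  toFun p := (p.1 + 1, e p.1 p.2)
  invFun p := (p.1 - 1, (e (p.1 - 1)).symm p.2)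
  left_inv p := by simp
  right_inv p := by simp

theorem orbitShift_zpow_apply_fst (e : ℤ → Equiv.Perm α) (n : ℤ) (p : ℤ × α) :
    ((orbitShift e ^ n) p).1 = p.1 + n := by
  induction n using Int.induction_on generalizing p with
  | zero => simp
  | succ n ih => rw [zpow_add_one, Equiv.Perm.mul_apply, ih, orbitShift_apply]; ring
  | pred n ih =>
    rw [zpow_sub_one, Equiv.Perm.mul_apply, ih, Equiv.Perm.inv_def, orbitShift_symm_apply]; ring

theorem exists_isOrbit (hf : ∀ x, Bijective (f x)) (x₀ : ℤ) (a : α) :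
    ∃ Φ, IsOrbit f Φ ∧ Φ x₀ = a := by
  let σ := orbitShift fun x => Equiv.ofBijective (f x) (hf x)
  refine ⟨fun x => ((σ ^ (x - x₀)) (x₀, a)).2, fun x => ?_, by simp⟩
  have hfst : ((σ ^ (x - x₀)) (x₀, a)).1 = x := by
    rw [orbitShift_zpow_apply_fst, add_sub_cancel]
  simp only [show x + 1 - x₀ = 1 + (x - x₀) by ring, zpow_one_add, Equiv.Perm.mul_apply]
  generalize (σ ^ (x - x₀)) (x₀, a) = q at hfst ⊢
  simp only [σ, orbitShift_apply, Equiv.ofBijective_apply, hfst]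

/-- The ascription `(i : ℤ)` coerces the list `List.range n` itself to `List ℤ` (exactly as in
`TV`), hence the `flatMap` bookkeeping in the proof. -/
theorem IsOrbit.foldl_range (hΦ : IsOrbit f Φ) (m : ℤ) (n : ℕ) :
    (List.range n).foldl (fun a i => f ((i : ℤ) - m) a) (Φ (-m)) = Φ (n - m) := by
  induction n with
  | zero => simp
  | succ n ih =>
    simp only [List.range_succ, List.bind_eq_flatMap, List.flatMap_append, List.foldl_append] at ih ⊢
    rw [ih]
    simp only [List.pure_def, List.flatMap_cons, List.flatMap_nil, List.append_nil, List.foldl_cons,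
      List.foldl_nil, hΦ (n - m)]
    push_cast
    ring_nf

theorem IsOrbit.iterate_eq (hΦ : IsOrbit f Φ) {g : α → α} {x₀ : ℤ} (hg : ∀ x, x₀ ≤ x → f x = g)
    (n : ℕ) : g^[n] (Φ x₀) = Φ (x₀ + n) := by
  induction n with
  | zero => simp
  | succ n ih =>
    rw [iterate_succ_apply', ih, ← hg (x₀ + n) (by omega), hΦ]
    push_cast
    ring_nf

theorem IsOrbit.invFun_iterate_eq [Nonempty α] (hΦ : IsOrbit f Φ) {g : α → α}
    (hg_inj : Injective g) {x₀ : ℤ} (hg : ∀ x, x < x₀ → f x = g) (n : ℕ) :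
    (invFun g)^[n] (Φ x₀) = Φ (x₀ - n) := by
  induction n with
  | zero => simp
  | succ n ih =>
    rw [iterate_succ_apply', ih, show x₀ - n = x₀ - (n + 1 : ℕ) + 1 by push_cast; ring,
      ← hΦ, hg _ (by omega), leftInverse_invFun hg_inj]

end Orbit

section Summability

theorem memℓp_two_iff_summable_sum_sq {ι κ E : Type*} [Fintype κ] [NormedAddCommGroup E]
    (f : ι × κ → E) : Memℓp f 2 ↔ Summable fun x => ∑ j, ‖f (x, j)‖ ^ 2 := by
  rw [memℓp_gen_iff (by norm_num), summable_prod_of_nonneg (fun _ => by positivity)]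
  simp [Summable.of_finite]

theorem summable_add_comp_sub_one_iff {c : ℤ → ℝ} (hc : 0 ≤ c) :
    Summable (fun x => c x + c (x - 1)) ↔ Summable c := by
  refine ⟨fun h => h.of_nonneg_of_le hc fun x => le_add_of_nonneg_right (hc _), fun h => ?_⟩
  exact h.add ((Equiv.subRight (1 : ℤ)).summable_iff.2 h)

theorem summable_int_iff_summable_nat_tails {G : Type*} [AddCommGroup G] [UniformSpace G]
    [IsUniformAddGroup G] [CompleteSpace G] (g : ℤ → G) (a b : ℕ) :
    Summable g ↔ Summable (fun n : ℕ => g (n + a)) ∧ Summable (fun n : ℕ => g (-(n + b))) := by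
  rw [summable_int_iff_summable_nat_and_neg, ← summable_nat_add_iff a (f := fun n : ℕ => g n),
    ← summable_nat_add_iff b (f := fun n : ℕ => g (-n))]
  push_cast
  rfl

end Summability

section Transfer

variable {L : ℕ} (E k : ℝ) (V : ℤ × ZMod L → ℝ)

theorem T0_eq_transferEquiv :
    T0 L E k = transferEquiv (fun φ => (E : ℂ) • φ - deltaK L k φ) := rfl

theorem Tstep_eq_transferEquiv (x : ℤ) :
    Tstep L E k V x =
      transferEquiv (fun φ => (E : ℂ) • φ - deltaK L k φ - (fun j => (V (x, j) : ℂ)) * φ) := rfl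

theorem T0_bijective : Bijective (T0 L E k) := by
  rw [T0_eq_transferEquiv]
  exact Equiv.bijective _

theorem Tstep_bijective (x : ℤ) : Bijective (Tstep L E k V x) := by
  rw [Tstep_eq_transferEquiv]
  exact Equiv.bijective _

theorem Tstep_eq_T0 {x : ℤ} (h : ∀ j, V (x, j) = 0) : Tstep L E k V x = T0 L E k := by
  funext Ψ
  simp [Tstep, T0, h]

theorem isOrbit_Tstep_zero : IsOrbit (Tstep L E k V) 0 := fun x => by
  ext j <;> simp [Tstep, deltaK]

def colPair (f : ℤ × ZMod L → ℂ) (x : ℤ) : (ZMod L → ℂ) × (ZMod L → ℂ) :=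
  (fun j => f (x, j), fun j => f (x - 1, j))

def ofColPairs (Φ : ℤ → (ZMod L → ℂ) × (ZMod L → ℂ)) : ℤ × ZMod L → ℂ :=
  fun p => (Φ p.1).1 p.2

theorem isOrbit_colPair_iff (f : ℤ × ZMod L → ℂ) :
    IsOrbit (Tstep L E k V) (colPair f) ↔ ∀ (x : ℤ) (j : ZMod L),
      f (x + 1, j) + f (x - 1, j) + Complex.exp (Complex.I * k) * f (x, j + 1)
        + Complex.exp (-(Complex.I * k)) * f (x, j - 1) + (V (x, j) : ℂ) * f (x, j)
        = (E : ℂ) * f (x, j) := by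
  simp only [IsOrbit, colPair, Tstep, deltaK, Prod.ext_iff, funext_iff, add_sub_cancel_right,
    and_true]
  exact forall₂_congr fun x j =>
    ⟨fun h => by linear_combination -h, fun h => by linear_combination -h⟩

theorem normSq_colPair [NeZero L] (f : ℤ × ZMod L → ℂ) (x : ℤ) :
    normSq L (colPair f x) = ∑ j, ‖f (x, j)‖ ^ 2 + ∑ j, ‖f (x - 1, j)‖ ^ 2 := rfl

theorem memℓp_two_iff_summable_normSq_colPair [NeZero L] (f : ℤ × ZMod L → ℂ) :
    Memℓp f 2 ↔ Summable fun x => normSq L (colPair f x) := by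
  simp only [normSq_colPair]
  rw [memℓp_two_iff_summable_sum_sq, summable_add_comp_sub_one_iff
    (c := fun x => ∑ j, ‖f (x, j)‖ ^ 2) fun x => by positivity]

variable {E k V}

theorem IsOrbit.colPair_ofColPairs {Φ : ℤ → (ZMod L → ℂ) × (ZMod L → ℂ)}
    (hΦ : IsOrbit (Tstep L E k V) Φ) : colPair (ofColPairs Φ) = Φ := by
  funext x
  refine Prod.ext rfl ?_
  conv_rhs => rw [← sub_add_cancel x 1, ← hΦ]
  rfl

theorem IsOrbit.ofColPairs_eq_zero_iff {Φ : ℤ → (ZMod L → ℂ) × (ZMod L → ℂ)}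
    (hΦ : IsOrbit (Tstep L E k V) Φ) (x₀ : ℤ) : ofColPairs Φ = 0 ↔ Φ x₀ = 0 := by
  constructor
  · intro h
    rw [← hΦ.colPair_ofColPairs, h]
    rfl
  · intro h
    rw [hΦ.eq_of_apply_eq (fun x => (Tstep_bijective E k V x).injective)
      (isOrbit_Tstep_zero E k V) x₀ h]
    rfl

theorem IsOrbit.TV_apply {Φ : ℤ → (ZMod L → ℂ) × (ZMod L → ℂ)}
    (hΦ : IsOrbit (Tstep L E k V) Φ) (R : ℕ) : TV L R E k V (Φ (-R)) = Φ (R + 1) := by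
  rw [TV, hΦ.foldl_range]
  push_cast
  ring_nf

theorem IsOrbit.memℓp_ofColPairs_iff [NeZero L] {R : ℕ}
    (hV : ∀ (x : ℤ) (j : ZMod L), (R : ℤ) < |x| → V (x, j) = 0)
    {Φ : ℤ → (ZMod L → ℂ) × (ZMod L → ℂ)} (hΦ : IsOrbit (Tstep L E k V) Φ) :
    Memℓp (ofColPairs Φ) 2 ↔
      Summable (fun n : ℕ => normSq L ((T0 L E k)^[n] (TV L R E k V (Φ (-R))))) ∧
      Summable (fun n : ℕ => normSq L ((invFun (T0 L E k))^[n] (Φ (-R)))) := by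
  have hfwd := hΦ.iterate_eq (x₀ := R + 1) fun x hx =>
    Tstep_eq_T0 E k V fun j => hV x j (by rw [abs_of_pos (by omega)]; omega)
  have hbwd := hΦ.invFun_iterate_eq (T0_bijective E k).injective (x₀ := -R) fun x hx =>
    Tstep_eq_T0 E k V fun j => hV x j (by rw [abs_of_neg (by omega)]; omega)
  rw [memℓp_two_iff_summable_normSq_colPair, hΦ.colPair_ofColPairs,
    summable_int_iff_summable_nat_tails _ (R + 1) R, hΦ.TV_apply]
  simp only [hfwd, hbwd]
  refine and_congr ?_ ?_ <;> congr! 4 <;> push_cast <;> ring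

end Transfer

theorem eigenvalue_iff_decaying_transfer_solution
    (L : ℕ) [NeZero L] (R : ℕ)
    (V : ℤ × ZMod L → ℝ)
    (hVsupp : ∀ (x : ℤ) (j : ZMod L), (R : ℤ) < |x| → V (x, j) = 0)
    (Hk : ℝ → (lp (fun _ : ℤ × ZMod L => ℂ) 2 →L[ℂ] lp (fun _ : ℤ × ZMod L => ℂ) 2))
    (hHk : ∀ (k : ℝ) (ψ : lp (fun _ : ℤ × ZMod L => ℂ) 2) (x : ℤ) (j : ZMod L),
      Hk k ψ (x, j) = ψ (x + 1, j) + ψ (x - 1, j)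
        + Complex.exp (Complex.I * k) * ψ (x, j + 1)
        + Complex.exp (-(Complex.I * k)) * ψ (x, j - 1)
        + (V (x, j) : ℂ) * ψ (x, j))
    (E k : ℝ) :
    Function.Bijective (T0 L E k) ∧
      ((∃ ψ : lp (fun _ : ℤ × ZMod L => ℂ) 2, ψ ≠ 0 ∧ Hk k ψ = (E : ℂ) • ψ) ↔
        ∃ Ψ : (ZMod L → ℂ) × (ZMod L → ℂ), Ψ ≠ 0 ∧
          Summable (fun n : ℕ => normSq L ((T0 L E k)^[n] (TV L R E k V Ψ))) ∧
          Summable (fun n : ℕ => normSq L ((Function.invFun (T0 L E k))^[n] Ψ))) := by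
  have eigen_iff (ψ : lp (fun _ : ℤ × ZMod L => ℂ) 2) :
      Hk k ψ = (E : ℂ) • ψ ↔ IsOrbit (Tstep L E k V) (colPair ψ) := by
    simp only [isOrbit_colPair_iff, ← hHk, lp.ext_iff, funext_iff, Prod.forall, lp.coeFn_smul,
      Pi.smul_apply, smul_eq_mul]
  refine ⟨T0_bijective E k, fun ⟨ψ, hψ, heig⟩ => ?_, fun ⟨Ψ, hΨ, hdec⟩ => ?_⟩
  · have hΦ := (eigen_iff ψ).1 heig
    refine ⟨colPair ψ (-R), fun h => hψ ?_, (hΦ.memℓp_ofColPairs_iff hVsupp).1 ψ.2⟩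
    exact lp.ext ((hΦ.ofColPairs_eq_zero_iff _).2 h)
  · obtain ⟨Φ, hΦ, rfl⟩ := exists_isOrbit (Tstep_bijective E k V) (-R) Ψ
    let ψ : lp (fun _ : ℤ × ZMod L => ℂ) 2 :=
      ⟨ofColPairs Φ, (hΦ.memℓp_ofColPairs_iff hVsupp).2 hdec⟩
    refine ⟨ψ, fun h => hΨ ((hΦ.ofColPairs_eq_zero_iff _).1 (congrArg Subtype.val h)), ?_⟩
    rw [eigen_iff, show colPair ψ = Φ from hΦ.colPair_ofColPairs]
    exact hΦ

end
end

section
/- Let L be a positive integer and E, k ∈ ℝ. A complex number λ is an eigenvalue of T₀(E,k) (i.e., there is a nonzero v ∈ ℂ^{ℤ/Lℤ} × ℂ^{ℤ/Lℤ} with T₀(E,k) v = λ v) if and only if λ ≠ 0 and λ + λ⁻¹ = E − 2·cos(k + 2πj/L) for some integer j. -/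
open scoped BigOperators

noncomputable section

/-!
If `T₀(φ, χ) = λ (φ, χ)` then `φ = λ χ`, so `λ ≠ 0` and `Δᵏ φ = (E - λ - λ⁻¹) φ` with `φ ≠ 0`;
conversely every eigenvector `φ` of `Δᵏ` gives the eigenvector `(φ, λ⁻¹ φ)` of `T₀`. The discrete
Fourier transform on `ℤ/Lℤ` turns the shifts `φ ↦ φ(· ± 1)` into multiplication by `e^{±2πim/L}`,
so it diagonalises `Δᵏ` with eigenvalues `e^{ik} e^{2πim/L} + e^{-ik} e^{-2πim/L} = 2 cos(k + 2πm/L)`.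
-/

open Complex ZMod Module End

lemma Module.End.hasEigenvalue_iff_exists_ne_zero {R M : Type*} [CommRing R] [AddCommGroup M]
    [Module R M] {f : End R M} {μ : R} : f.HasEigenvalue μ ↔ ∃ v, v ≠ 0 ∧ f v = μ • v := by
  simp only [hasEigenvalue_iff, Submodule.ne_bot_iff, mem_eigenspace_iff, and_comm]

section Transfer

variable {K V : Type*} [Field K] [AddCommGroup V] [Module K V]

/-- The transfer matrix of the second-order recursion `ψₙ₊₁ = A ψₙ - ψₙ₋₁`. -/
def transfer (A : End K V) : End K (V × V) :=
  (A ∘ₗ LinearMap.fst K V V - LinearMap.snd K V V).prod (LinearMap.fst K V V)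

@[simp]
lemma transfer_apply (A : End K V) (v : V × V) : transfer A v = (A v.1 - v.2, v.1) := rfl

lemma hasEigenvalue_transfer_iff (A : End K V) (lam : K) :
    (transfer A).HasEigenvalue lam ↔ lam ≠ 0 ∧ A.HasEigenvalue (lam + lam⁻¹) := by
  simp only [hasEigenvalue_iff_exists_ne_zero, transfer_apply]
  constructor
  · rintro ⟨⟨φ, χ⟩, hv, hT⟩
    obtain ⟨hA, hφ⟩ : A φ - χ = lam • φ ∧ φ = lam • χ := Prod.ext_iff.mp hT
    have hlam : lam ≠ 0 := by
      rintro rfl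
      rw [zero_smul] at hφ
      simp_all
    refine ⟨hlam, φ, fun h => hv ?_, ?_⟩
    · subst h
      have hχ : χ = 0 := (smul_eq_zero.mp hφ.symm).resolve_left hlam
      simp [hχ]
    · have hχ : χ = lam⁻¹ • φ := by rw [hφ, inv_smul_smul₀ hlam]
      rw [add_smul, ← hχ, ← hA, sub_add_cancel]
  · rintro ⟨hlam, φ, hφ, hA⟩
    refine ⟨(φ, lam⁻¹ • φ), fun h => hφ (congrArg Prod.fst h), Prod.ext ?_ ?_⟩
    · simp [hA, add_smul]
    · simp [smul_inv_smul₀ hlam]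

end Transfer

lemma ZMod.dft_comp_add_right {N : ℕ} [NeZero N] {E : Type*} [AddCommGroup E] [Module ℂ E]
    (Φ : ZMod N → E) (a : ZMod N) :
    𝓕 (fun j ↦ Φ (j + a)) = fun m ↦ stdAddChar (a * m) • 𝓕 Φ m := by
  funext m
  simp only [dft_apply, Finset.smul_sum, smul_smul, ← AddChar.map_add_eq_mul]
  refine Fintype.sum_equiv (Equiv.addRight a) _ _ fun j => ?_
  simp only [Equiv.coe_addRight]
  ring_nf

def twistedLaplacian (L : ℕ) (k : ℝ) : End ℂ (ZMod L → ℂ) where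
  toFun := deltaK L k
  map_add' φ ψ := by funext j; simp only [deltaK, Pi.add_apply]; ring
  map_smul' c φ := by
    funext j; simp only [deltaK, Pi.smul_apply, smul_eq_mul, RingHom.id_apply]; ring

section TwistedLaplacian

variable {L : ℕ} (k : ℝ)

lemma twistedLaplacian_eq_smul_add_smul (φ : ZMod L → ℂ) :
    twistedLaplacian L k φ =
      exp (I * k) • (fun j ↦ φ (j + 1)) + exp (-(I * k)) • (fun j ↦ φ (j + -1)) := by
  funext j
  simp [twistedLaplacian, deltaK, sub_eq_add_neg]

variable [NeZero L]

def laplacianSymbol (m : ZMod L) : ℂ :=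
  exp (I * k) * stdAddChar m + exp (-(I * k)) * stdAddChar (-m)

lemma laplacianSymbol_intCast (j : ℤ) :
    laplacianSymbol k (j : ZMod L) = ((2 * Real.cos (k + 2 * Real.pi * j / L) : ℝ) : ℂ) := by
  rw [laplacianSymbol, ← Int.cast_neg, stdAddChar_coe, stdAddChar_coe, ← exp_add, ← exp_add]
  push_cast
  rw [two_cos]
  have hL : (L : ℂ) ≠ 0 := Nat.cast_ne_zero.mpr (NeZero.ne L)
  congr 1 <;> (congr 1; field_simp <;> ring)

lemma dft_twistedLaplacian (φ : ZMod L → ℂ) (m : ZMod L) :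
    𝓕 (twistedLaplacian L k φ) m = laplacianSymbol k m * 𝓕 φ m := by
  rw [twistedLaplacian_eq_smul_add_smul, map_add, LinearEquiv.map_smul, LinearEquiv.map_smul,
    dft_comp_add_right, dft_comp_add_right]
  simp only [Pi.add_apply, Pi.smul_apply, smul_eq_mul, laplacianSymbol, one_mul, neg_one_mul]
  ring

lemma twistedLaplacian_stdAddChar (m : ZMod L) :
    twistedLaplacian L k (fun x ↦ stdAddChar (x * m)) =
      laplacianSymbol k m • fun x ↦ stdAddChar (x * m) := by
  funext x
  simp only [twistedLaplacian, deltaK, LinearMap.coe_mk, AddHom.coe_mk, Pi.smul_apply,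
    smul_eq_mul, laplacianSymbol, add_mul, one_mul, sub_eq_add_neg,
    AddChar.map_add_eq_mul]
  ring

lemma hasEigenvalue_twistedLaplacian_iff (c : ℂ) :
    (twistedLaplacian L k).HasEigenvalue c ↔
      ∃ j : ℤ, c = ((2 * Real.cos (k + 2 * Real.pi * j / L) : ℝ) : ℂ) := by
  simp only [← laplacianSymbol_intCast]
  constructor
  · intro hc
    obtain ⟨φ, hφ, hΔ⟩ := hasEigenvalue_iff_exists_ne_zero.mp hc
    obtain ⟨m, hm⟩ : ∃ m, 𝓕 φ m ≠ 0 :=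
      Function.ne_iff.mp ((LinearEquiv.map_ne_zero_iff dft).mpr hφ)
    refine ⟨cast m, mul_right_cancel₀ hm ?_⟩
    rw [intCast_zmod_cast, ← dft_twistedLaplacian, hΔ, LinearEquiv.map_smul, Pi.smul_apply,
      smul_eq_mul]
  · rintro ⟨j, rfl⟩
    refine hasEigenvalue_iff_exists_ne_zero.mpr ⟨_, fun h ↦ ?_, twistedLaplacian_stdAddChar k _⟩
    simpa using congrFun h 0

end TwistedLaplacian

theorem eigenvalues_of_free_transfer_matrix
    (L : ℕ) [NeZero L] (E k : ℝ) (lam : ℂ) :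
    (∃ v : (ZMod L → ℂ) × (ZMod L → ℂ), v ≠ 0 ∧ T0 L E k v = lam • v) ↔
      (lam ≠ 0 ∧ ∃ j : ℤ,
        lam + lam⁻¹ = ((E - 2 * Real.cos (k + 2 * Real.pi * j / L) : ℝ) : ℂ)) := by
  have hT : ⇑(transfer ((E : ℂ) • LinearMap.id - twistedLaplacian L k)) = T0 L E k := rfl
  rw [← hT, ← hasEigenvalue_iff_exists_ne_zero, hasEigenvalue_transfer_iff,
    hasEigenvalue_sub'_iff, hasEigenvalue_twistedLaplacian_iff]
  simp only [ofReal_sub, sub_eq_iff_comm (a := (E : ℂ)), eq_comm (a := lam + lam⁻¹)]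
end
end

section
/- Let d ≥ 1, let V : ℤ^d → ℝ be bounded, and let H be the bounded self-adjoint operator on ℓ²(ℤ^d; ℂ) given by (Hψ)(m) = ∑_{m' : ‖m−m'‖₁ = 1} ψ(m') + V(m)ψ(m). Fix an index 1 ≤ j ≤ d. Then for every ψ ∈ ℓ²(ℤ^d; ℂ) and every t ∈ ℝ, the inequality (∑'_{m ∈ ℤ^d} m_j² · |(e^{−itH}ψ)(m)|²)^{1/2} ≤ (∑'_{m ∈ ℤ^d} m_j² · |ψ(m)|²)^{1/2} + 2|t|·‖ψ‖ holds in the extended nonnegative reals [0, ∞]. In particular, if ∑'_{m} m_j²·|ψ(m)|² < ∞ then ∑'_{m} m_j²·|(e^{−itH}ψ)(m)|² < ∞ for all t ∈ ℝ. -/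
/-!
Clip the position to `[-R, R]`: the multiplication operator `X_R` by the clipped coordinate
`m_j` is bounded. It commutes with the potential, and a lattice shift moves the clipped
coordinate by at most one, so `‖⁅X_R, H⁆‖ ≤ 2` uniformly in `R`. In the Heisenberg picture
`s ↦ e^{isH} X_R e^{-isH}` has derivative `e^{isH} ⁅X_R, -iH⁆ e^{-isH}`, of norm at most `2`,
whence `‖X_R e^{-itH} ψ‖ ≤ ‖X_R ψ‖ + 2|t|‖ψ‖`. The square root of the second moment is the
supremum over `R` of `‖X_R φ‖`, so the bound passes to the moments.
-/

open Filter
open scoped ENNReal BigOperators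

noncomputable section

/-- The Hilbert space `ℓ²(ℤ^d; ℂ)`. -/
abbrev l2Zd (d : ℕ) : Type := lp (fun _ : Fin d → ℤ => ℂ) 2

/-- The time evolution `e^{-itH}` of a bounded operator `H` on `ℓ²(ℤ^d; ℂ)`. -/
def timeEvol {d : ℕ} (H : l2Zd d →L[ℂ] l2Zd d) (t : ℝ) : l2Zd d →L[ℂ] l2Zd d :=
  NormedSpace.exp ((-(t : ℂ) * Complex.I) • H)

open scoped lp

section Reindexing

variable {ι 𝕜 E : Type*} [NormedField 𝕜] [NormedAddCommGroup E] [NormedSpace 𝕜 E] {p : ℝ≥0∞}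

theorem Memℓp.comp_equiv (hp : 0 < p.toReal) {f : ι → E} (hf : Memℓp f p) (σ : ι ≃ ι) :
    Memℓp (f ∘ σ) p :=
  (memℓp_gen_iff hp).2 <| (σ.summable_iff (f := fun i => ‖f i‖ ^ p.toReal)).2 <|
    (memℓp_gen_iff hp).1 hf

namespace lp

variable [Fact (1 ≤ p)]

variable (𝕜 p) in
def funCongrLeft (hp : 0 < p.toReal) (σ : ι ≃ ι) : ℓ^p(ι, E) ≃ₗᵢ[𝕜] ℓ^p(ι, E) where
  toFun f := ⟨f ∘ σ, (lp.memℓp f).comp_equiv hp σ⟩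
  invFun f := ⟨f ∘ σ.symm, (lp.memℓp f).comp_equiv hp σ.symm⟩
  left_inv f := by ext; simp
  right_inv f := by ext; simp
  map_add' _ _ := rfl
  map_smul' _ _ := rfl
  norm_map' f := by
    simp only [LinearEquiv.coe_mk, norm_eq_tsum_rpow hp]
    exact congrArg (· ^ _) (σ.tsum_eq fun i => ‖f i‖ ^ p.toReal)

theorem enorm_rpow_eq_tsum (hp : 0 < p.toReal) (f : ℓ^p(ι, E)) :
    ‖f‖ₑ ^ p.toReal = ∑' i, ‖f i‖ₑ ^ p.toReal := by
  simp only [← ofReal_norm, ENNReal.ofReal_rpow_of_nonneg (norm_nonneg _) hp.le]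
  rw [norm_rpow_eq_tsum hp, ENNReal.ofReal_tsum_of_nonneg (fun i => by positivity)
    ((lp.memℓp f).summable hp)]

end lp

end Reindexing

section MultiplicationOperators

variable {ι : Type*}

theorem lie_eq_zero_of_apply_eq_mul {X T : ℓ²(ι, ℂ) →L[ℂ] ℓ²(ι, ℂ)} {x v : ι → ℂ}
    (hX : ∀ f i, X f i = x i * f i) (hT : ∀ f i, T f i = v i * f i) : ⁅X, T⁆ = 0 := by
  ext f i
  simp only [Ring.lie_def, sub_apply, mul_apply_eq_comp, lp.coeFn_sub, Pi.sub_apply, hX, hT,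
    zero_apply, lp.coeFn_zero, Pi.zero_apply]
  ring

theorem isSelfAdjoint_of_apply_eq_ofReal_mul {T : ℓ²(ι, ℂ) →L[ℂ] ℓ²(ι, ℂ)} {v : ι → ℝ}
    (hT : ∀ f i, T f i = v i * f i) : IsSelfAdjoint T := by
  rw [ContinuousLinearMap.isSelfAdjoint_iff_isSymmetric]
  intro f g
  simp only [ContinuousLinearMap.coe_coe, lp.inner_eq_tsum, hT]
  refine tsum_congr fun i => ?_
  simp only [RCLike.inner_apply, map_mul, Complex.conj_ofReal]
  ring

theorem norm_lie_le_of_apply_eq_mul {X : ℓ²(ι, ℂ) →L[ℂ] ℓ²(ι, ℂ)} {x : ι → ℂ}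
    (hX : ∀ f i, X f i = x i * f i) {U : ℓ²(ι, ℂ) ≃ₗᵢ[ℂ] ℓ²(ι, ℂ)} {σ : ι → ι}
    (hU : ∀ f i, U f i = f (σ i)) {c : ℝ} (hc : 0 ≤ c) (hxσ : ∀ i, ‖x i - x (σ i)‖ ≤ c) :
    ‖⁅X, (U : ℓ²(ι, ℂ) →L[ℂ] ℓ²(ι, ℂ))⁆‖ ≤ c := by
  refine ContinuousLinearMap.opNorm_le_bound _ hc fun f => ?_
  calc ‖⁅X, (U : ℓ²(ι, ℂ) →L[ℂ] ℓ²(ι, ℂ))⁆ f‖ ≤ ‖(c : ℂ) • U f‖ := by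
        refine lp.norm_mono (by norm_num) fun i => ?_
        simp only [Ring.lie_def, sub_apply, mul_apply_eq_comp, lp.coeFn_sub, Pi.sub_apply, hX,
          ContinuousLinearEquiv.coe_coe, LinearIsometryEquiv.coe_toContinuousLinearEquiv, hU,
          lp.coeFn_smul, Pi.smul_apply, smul_eq_mul]
        rw [← sub_mul, norm_mul, norm_mul, Complex.norm_real, Real.norm_of_nonneg hc]
        exact mul_le_mul_of_nonneg_right (hxσ i) (norm_nonneg _)
    _ = c * ‖f‖ := by rw [norm_smul, LinearIsometryEquiv.norm_map, Complex.norm_real,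
        Real.norm_of_nonneg hc]

end MultiplicationOperators

section Heisenberg

open NormedSpace

variable {A : Type*} [CStarAlgebra A]

theorem exp_smul_mem_unitary {a : A} (ha : a ∈ skewAdjoint A) (s : ℝ) :
    exp (s • a) ∈ unitary A :=
  let +nondep : NormedAlgebra ℚ A := .restrictScalars ℚ ℂ A
  exp_mem_unitary_of_mem_skewAdjoint (skewAdjoint.smul_mem s ha)

theorem norm_lie_exp_smul_le {a : A} (ha : a ∈ skewAdjoint A) (x : A) (t : ℝ) :
    ‖⁅x, exp (t • a)⁆‖ ≤ |t| * ‖⁅x, a⁆‖ := by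
  let +nondep : NormedAlgebra ℚ A := .restrictScalars ℚ ℂ A
  set U : ℝ → A := fun s => exp (s • a)
  have hU : ∀ s, U s ∈ unitary A := exp_smul_mem_unitary ha
  have hUa : ∀ s, a * U s = U s * a := fun s => ((Commute.refl a).smul_right s).exp_right
  have hUneg : ∀ s, U (-s) * U s = 1 := fun s => by
    rw [← exp_add_of_commute ((Commute.refl a).smul_left _ |>.smul_right _), neg_smul,
      neg_add_cancel, exp_zero]
  set G : ℝ → A := fun s => U (-s) * x * U s
  have hG : ∀ s, HasDerivAt G (U (-s) * ⁅x, a⁆ * U s) s := by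
    intro s
    have h1 : HasDerivAt (fun s => U (-s)) (-(U (-s) * a)) s := by
      simpa [U] using (hasDerivAt_exp_smul_const (𝕂 := ℝ) (-a) s)
    have h2 : HasDerivAt U (U s * a) s := hasDerivAt_exp_smul_const (𝕂 := ℝ) a s
    refine ((h1.mul_const x).mul h2).congr_deriv ?_
    rw [Ring.lie_def, ← hUa s]
    noncomm_ring
  have hG' : ∀ s, ‖U (-s) * ⁅x, a⁆ * U s‖ = ‖⁅x, a⁆‖ := fun s => by
    rw [CStarRing.norm_mul_mem_unitary _ (hU s), CStarRing.norm_mem_unitary_mul _ (hU _)]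
  have hGt : ‖G t - G 0‖ ≤ ‖⁅x, a⁆‖ * ‖t - 0‖ :=
    convex_univ.norm_image_sub_le_of_norm_hasDerivWithin_le
      (fun s _ => (hG s).hasDerivWithinAt) (fun s _ => (hG' s).le) trivial trivial
  calc ‖⁅x, U t⁆‖ = ‖U (-t) * ⁅x, U t⁆‖ := (CStarRing.norm_mem_unitary_mul _ (hU _)).symm
    _ = ‖G t - G 0‖ := by
        simp only [G, Ring.lie_def, mul_sub, ← mul_assoc, hUneg, neg_zero]
        simp [U]
    _ ≤ |t| * ‖⁅x, a⁆‖ := by simpa [mul_comm] using hGt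

variable {F : Type*} [NormedAddCommGroup F] [InnerProductSpace ℂ F] [CompleteSpace F]

theorem IsSelfAdjoint.norm_apply_exp_le {H : F →L[ℂ] F} (hH : IsSelfAdjoint H) (X : F →L[ℂ] F)
    (ψ : F) (t : ℝ) :
    ‖X (NormedSpace.exp ((-(t : ℂ) * Complex.I) • H) ψ)‖ ≤ ‖X ψ‖ + |t| * ‖⁅X, H⁆‖ * ‖ψ‖ := by
  have ha : Complex.I • H ∈ skewAdjoint (F →L[ℂ] F) :=
    hH.smul_mem_skewAdjoint Complex.conj_I
  have hexp : (-(t : ℂ) * Complex.I) • H = (-t) • (Complex.I • H) := by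
    rw [← Complex.coe_smul, smul_smul]; push_cast; rfl
  rw [hexp]
  set U := NormedSpace.exp ((-t) • (Complex.I • H))
  have hU : U ∈ unitary (F →L[ℂ] F) := exp_smul_mem_unitary ha (-t)
  have hXU : ‖⁅X, U⁆‖ ≤ |t| * ‖⁅X, H⁆‖ := by
    have hlie : ⁅X, Complex.I • H⁆ = Complex.I • ⁅X, H⁆ := by
      simp only [Ring.lie_def, mul_smul_comm, smul_mul_assoc, smul_sub]
    have := norm_lie_exp_smul_le ha X (-t)
    rwa [abs_neg, hlie, norm_smul, Complex.norm_I, one_mul] at this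
  calc ‖X (U ψ)‖ = ‖U (X ψ) + ⁅X, U⁆ ψ‖ := by simp [Ring.lie_def]
    _ ≤ ‖X ψ‖ + |t| * ‖⁅X, H⁆‖ * ‖ψ‖ := by
        refine norm_add_le_of_le (ContinuousLinearMap.norm_map_of_mem_unitary hU _).le ?_
        exact ⁅X, U⁆.le_of_opNorm_le hXU ψ

end Heisenberg

section Clip

def clip (R : ℕ) (k : ℤ) : ℤ := max (-R) (min R k)

theorem abs_clip_le (R : ℕ) (k : ℤ) : |clip R k| ≤ R := by
  rw [abs_le]; simp only [clip]; omega

theorem abs_clip_le_abs (R : ℕ) (k : ℤ) : |clip R k| ≤ |k| := by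
  rw [abs_le]; rcases abs_cases k with ⟨h, _⟩ | ⟨h, _⟩ <;> rw [h] <;> simp only [clip] <;> omega

theorem clip_of_abs_le {R : ℕ} {k : ℤ} (h : |k| ≤ R) : clip R k = k := by
  rw [abs_le] at h; simp only [clip]; omega

theorem abs_clip_sub_clip_le (R : ℕ) (a b : ℤ) : |clip R a - clip R b| ≤ |a - b| := by
  rw [abs_le]; rcases abs_cases (a - b) with ⟨h, _⟩ | ⟨h, _⟩ <;> rw [h] <;> simp only [clip] <;>
    omega

end Clip

section Lattice

variable {d : ℕ}

def latticeShift (v : Fin d → ℤ) : l2Zd d ≃ₗᵢ[ℂ] l2Zd d :=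
  lp.funCongrLeft ℂ 2 (by norm_num) (Equiv.addRight v)

@[simp]
theorem latticeShift_apply (v : Fin d → ℤ) (f : l2Zd d) (m : Fin d → ℤ) :
    latticeShift v f m = f (m + v) := rfl

@[simp]
theorem latticeShift_symm_apply (v : Fin d → ℤ) (f : l2Zd d) (m : Fin d → ℤ) :
    (latticeShift v).symm f m = f (m - v) := rfl

variable (d) in
def adjacency : l2Zd d →L[ℂ] l2Zd d :=
  ∑ i, ((latticeShift (d := d) (Pi.single i 1) : l2Zd d →L[ℂ] l2Zd d) +
    star (latticeShift (d := d) (Pi.single i 1) : l2Zd d →L[ℂ] l2Zd d))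

theorem adjacency_apply (f : l2Zd d) (m : Fin d → ℤ) :
    adjacency d f m = ∑ i, (f (m + Pi.single i 1) + f (m - Pi.single i 1)) := by
  simp only [adjacency, sum_apply, add_apply, LinearIsometryEquiv.star_eq_symm, lp.coeFn_sum,
    Finset.sum_apply, lp.coeFn_add, Pi.add_apply, ContinuousLinearEquiv.coe_coe,
    LinearIsometryEquiv.coe_toContinuousLinearEquiv, latticeShift_apply, latticeShift_symm_apply]

theorem isSelfAdjoint_adjacency : IsSelfAdjoint (adjacency d) :=
  isSelfAdjoint_sum _ fun _ _ => IsSelfAdjoint.add_star_self _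

def truncatedPosition (j : Fin d) (R : ℕ) : l2Zd d →L[ℂ] l2Zd d :=
  lp.mapCLM 2 (fun m => ContinuousLinearMap.mul ℂ ℂ (clip R (m j))) R.cast_nonneg fun m =>
    (ContinuousLinearMap.opNorm_mul_apply_le ℂ ℂ _).trans <| by
      rw [Complex.norm_intCast]; exact_mod_cast abs_clip_le R (m j)

@[simp]
theorem truncatedPosition_apply (j : Fin d) (R : ℕ) (f : l2Zd d) (m : Fin d → ℤ) :
    truncatedPosition j R f m = clip R (m j) * f m := rfl

theorem norm_lie_truncatedPosition_le {U : l2Zd d ≃ₗᵢ[ℂ] l2Zd d} {v : Fin d → ℤ}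
    (hU : ∀ f m, U f m = f (m + v)) (j : Fin d) (R : ℕ) :
    ‖⁅truncatedPosition j R, (U : l2Zd d →L[ℂ] l2Zd d)⁆‖ ≤ |v j| :=
  norm_lie_le_of_apply_eq_mul (truncatedPosition_apply j R) hU (by positivity) fun m => by
    have := abs_clip_sub_clip_le R (m j) (m j + v j)
    rw [sub_add_cancel_left, abs_neg] at this
    rw [← Int.cast_sub, Complex.norm_intCast, Pi.add_apply]
    exact_mod_cast this

theorem norm_lie_truncatedPosition_adjacency_le (j : Fin d) (R : ℕ) :
    ‖⁅truncatedPosition j R, adjacency d⁆‖ ≤ 2 := by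
  set X := truncatedPosition j R
  set S : Fin d → (l2Zd d →L[ℂ] l2Zd d) := fun i => latticeShift (Pi.single i 1)
  have hS : ∀ i, ‖⁅X, S i⁆‖ ≤ |(Pi.single i 1 : Fin d → ℤ) j| :=
    fun i => norm_lie_truncatedPosition_le (latticeShift_apply _) j R
  have hS' : ∀ i, ‖⁅X, star (S i)⁆‖ ≤ |(Pi.single i 1 : Fin d → ℤ) j| := by
    intro i
    have := norm_lie_truncatedPosition_le (U := (latticeShift (Pi.single i 1)).symm)
      (v := -Pi.single i 1) (fun f m => by rw [latticeShift_symm_apply, sub_eq_add_neg]) j R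
    rwa [Pi.neg_apply, abs_neg, ← LinearIsometryEquiv.star_eq_symm] at this
  have hsplit : ⁅X, adjacency d⁆ = ∑ i, (⁅X, S i⁆ + ⁅X, star (S i)⁆) := by
    rw [adjacency, Ring.lie_def, Finset.mul_sum, Finset.sum_mul, ← Finset.sum_sub_distrib]
    refine Finset.sum_congr rfl fun i _ => ?_
    rw [Ring.lie_def, Ring.lie_def]
    noncomm_ring
  calc ‖⁅X, adjacency d⁆‖ ≤ ∑ i, (((|(Pi.single i 1 : Fin d → ℤ) j| : ℤ) : ℝ) +
      ((|(Pi.single i 1 : Fin d → ℤ) j| : ℤ) : ℝ)) := by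
        rw [hsplit]
        exact (norm_sum_le _ _).trans
          (Finset.sum_le_sum fun i _ => norm_add_le_of_le (hS i) (hS' i))
    _ = 2 := by
        rw [Finset.sum_eq_single j (fun i _ hij => by simp [Pi.single_eq_of_ne' hij]) (by simp)]
        norm_num

end Lattice

section Hamiltonian

variable {d : ℕ}

def IsDiscreteSchrodinger (V : (Fin d → ℤ) → ℝ) (H : l2Zd d →L[ℂ] l2Zd d) : Prop :=
  ∀ (ψ : l2Zd d) (m : Fin d → ℤ),
    H ψ m = (∑ i : Fin d,
        (ψ (m + (Pi.single i 1 : Fin d → ℤ)) + ψ (m - (Pi.single i 1 : Fin d → ℤ))))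
      + (V m : ℂ) * ψ m

variable {V : (Fin d → ℤ) → ℝ} {H : l2Zd d →L[ℂ] l2Zd d}

theorem IsDiscreteSchrodinger.sub_adjacency_apply (hH : IsDiscreteSchrodinger V H)
    (ψ : l2Zd d) (m : Fin d → ℤ) : (H - adjacency d) ψ m = V m * ψ m := by
  rw [sub_apply, lp.coeFn_sub, Pi.sub_apply, hH, adjacency_apply, add_sub_cancel_left]

theorem IsDiscreteSchrodinger.isSelfAdjoint (hH : IsDiscreteSchrodinger V H) :
    IsSelfAdjoint H := by
  simpa using
    isSelfAdjoint_adjacency.add (isSelfAdjoint_of_apply_eq_ofReal_mul hH.sub_adjacency_apply)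

theorem IsDiscreteSchrodinger.norm_lie_truncatedPosition_le (hH : IsDiscreteSchrodinger V H)
    (j : Fin d) (R : ℕ) : ‖⁅truncatedPosition j R, H⁆‖ ≤ 2 := by
  have hV : ⁅truncatedPosition j R, H - adjacency d⁆ = 0 :=
    lie_eq_zero_of_apply_eq_mul (truncatedPosition_apply j R) hH.sub_adjacency_apply
  have hsplit : ⁅truncatedPosition j R, H⁆ =
      ⁅truncatedPosition j R, adjacency d⁆ + ⁅truncatedPosition j R, H - adjacency d⁆ := by
    simp only [Ring.lie_def]
    noncomm_ring
  rw [hsplit, hV, add_zero]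
  exact norm_lie_truncatedPosition_adjacency_le j R

theorem IsDiscreteSchrodinger.enorm_truncatedPosition_timeEvol_le
    (hH : IsDiscreteSchrodinger V H) (j : Fin d) (R : ℕ) (ψ : l2Zd d) (t : ℝ) :
    ‖truncatedPosition j R (timeEvol H t ψ)‖ₑ ≤
      ‖truncatedPosition j R ψ‖ₑ + ENNReal.ofReal (2 * |t| * ‖ψ‖) := by
  have hlie : |t| * ‖⁅truncatedPosition j R, H⁆‖ * ‖ψ‖ ≤ 2 * |t| * ‖ψ‖ := by
    rw [mul_comm 2]
    gcongr
    exact hH.norm_lie_truncatedPosition_le j R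
  rw [← ofReal_norm, ← ofReal_norm]
  refine (ENNReal.ofReal_le_ofReal ?_).trans ENNReal.ofReal_add_le
  exact (hH.isSelfAdjoint.norm_apply_exp_le (truncatedPosition j R) ψ t).trans
    (add_le_add_right hlie _)

end Hamiltonian

section Moment

variable {d : ℕ}

def positionMoment (j : Fin d) (φ : l2Zd d) : ℝ≥0∞ :=
  ∑' m : Fin d → ℤ, ENNReal.ofReal ((m j : ℝ) ^ 2 * ‖φ m‖ ^ 2)

theorem enorm_truncatedPosition_sq (j : Fin d) (R : ℕ) (φ : l2Zd d) :
    ‖truncatedPosition j R φ‖ₑ ^ 2 =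
      ∑' m : Fin d → ℤ, ENNReal.ofReal ((clip R (m j) : ℝ) ^ 2 * ‖φ m‖ ^ 2) := by
  have := lp.enorm_rpow_eq_tsum (p := 2) (by norm_num) (truncatedPosition j R φ)
  simp only [ENNReal.toReal_ofNat, ENNReal.rpow_ofNat] at this
  rw [this]
  refine tsum_congr fun m => ?_
  rw [truncatedPosition_apply, ← ofReal_norm, ← ENNReal.ofReal_pow (norm_nonneg _), norm_mul,
    mul_pow, Complex.norm_intCast, sq_abs]

theorem positionMoment_eq_iSup (j : Fin d) (φ : l2Zd d) :
    positionMoment j φ = ⨆ R : ℕ, ‖truncatedPosition j R φ‖ₑ ^ 2 := by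
  simp only [enorm_truncatedPosition_sq]
  refine le_antisymm ?_ (iSup_le fun R => ENNReal.tsum_le_tsum fun m => ?_)
  · rw [positionMoment, ENNReal.tsum_eq_iSup_sum]
    refine iSup_le fun s => le_iSup_of_le (s.sup fun m => (m j).natAbs) ?_
    refine le_of_eq_of_le (Finset.sum_congr rfl fun m hm => ?_) (ENNReal.sum_le_tsum s)
    have hR : |m j| ≤ (s.sup fun m => (m j).natAbs : ℕ) := by
      rw [Int.abs_eq_natAbs]
      exact_mod_cast Finset.le_sup (f := fun m : Fin d → ℤ => (m j).natAbs) hm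
    rw [clip_of_abs_le hR]
  · refine ENNReal.ofReal_le_ofReal (mul_le_mul_of_nonneg_right ?_ (by positivity))
    rw [sq_le_sq, ← Int.cast_abs, ← Int.cast_abs]
    exact_mod_cast abs_clip_le_abs R (m j)

theorem positionMoment_rpow_half (j : Fin d) (φ : l2Zd d) :
    positionMoment j φ ^ ((1 : ℝ) / 2) = ⨆ R : ℕ, ‖truncatedPosition j R φ‖ₑ := by
  rw [positionMoment_eq_iSup, ← ENNReal.iSup_pow, one_div]
  exact_mod_cast ENNReal.pow_rpow_inv_natCast two_ne_zero _

end Moment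

theorem ballistic_upper_bound_discrete_general
    (d : ℕ)
    (V : (Fin d → ℤ) → ℝ)
    (H : l2Zd d →L[ℂ] l2Zd d)
    (hH : ∀ (ψ : l2Zd d) (m : Fin d → ℤ),
      H ψ m = (∑ i : Fin d,
          (ψ (m + (Pi.single i 1 : Fin d → ℤ)) + ψ (m - (Pi.single i 1 : Fin d → ℤ))))
        + (V m : ℂ) * ψ m)
    (j : Fin d) (ψ : l2Zd d) (t : ℝ) :
    ((∑' m : Fin d → ℤ,
        ENNReal.ofReal (((m j : ℝ)) ^ 2 * ‖timeEvol H t ψ m‖ ^ 2)) ^ ((1 : ℝ) / 2)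
      ≤ (∑' m : Fin d → ℤ,
          ENNReal.ofReal (((m j : ℝ)) ^ 2 * ‖ψ m‖ ^ 2)) ^ ((1 : ℝ) / 2)
        + ENNReal.ofReal (2 * |t| * ‖ψ‖)) ∧
    ((∑' m : Fin d → ℤ, ENNReal.ofReal (((m j : ℝ)) ^ 2 * ‖ψ m‖ ^ 2)) < ⊤ →
      ∀ s : ℝ, (∑' m : Fin d → ℤ,
        ENNReal.ofReal (((m j : ℝ)) ^ 2 * ‖timeEvol H s ψ m‖ ^ 2)) < ⊤) := by
  have hH' : IsDiscreteSchrodinger V H := hH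
  have key : ∀ s : ℝ, positionMoment j (timeEvol H s ψ) ^ ((1 : ℝ) / 2) ≤
      positionMoment j ψ ^ ((1 : ℝ) / 2) + ENNReal.ofReal (2 * |s| * ‖ψ‖) := fun s => by
    simp only [positionMoment_rpow_half, ENNReal.iSup_add]
    exact iSup_mono fun R => hH'.enorm_truncatedPosition_timeEvol_le j R ψ s
  refine ⟨key t, fun hψ s => ?_⟩
  have hfin : positionMoment j ψ ^ ((1 : ℝ) / 2) + ENNReal.ofReal (2 * |s| * ‖ψ‖) < ⊤ :=
    ENNReal.add_lt_top.2
      ⟨ENNReal.rpow_lt_top_of_nonneg (by norm_num) hψ.ne, ENNReal.ofReal_lt_top⟩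
  exact (ENNReal.rpow_lt_top_iff_of_pos (by norm_num)).1 ((key s).trans_lt hfin)

theorem ballistic_upper_bound_discrete
    (d : ℕ) (hd : 1 ≤ d)
    (V : (Fin d → ℤ) → ℝ) (hV : ∃ C : ℝ, ∀ m : Fin d → ℤ, |V m| ≤ C)
    (H : l2Zd d →L[ℂ] l2Zd d)
    (hH : ∀ (ψ : l2Zd d) (m : Fin d → ℤ),
      H ψ m = (∑ i : Fin d,
          (ψ (m + (Pi.single i 1 : Fin d → ℤ)) + ψ (m - (Pi.single i 1 : Fin d → ℤ))))
        + (V m : ℂ) * ψ m)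
    (j : Fin d) (ψ : l2Zd d) (t : ℝ) :
    ((∑' m : Fin d → ℤ,
        ENNReal.ofReal (((m j : ℝ)) ^ 2 * ‖timeEvol H t ψ m‖ ^ 2)) ^ ((1 : ℝ) / 2)
      ≤ (∑' m : Fin d → ℤ,
          ENNReal.ofReal (((m j : ℝ)) ^ 2 * ‖ψ m‖ ^ 2)) ^ ((1 : ℝ) / 2)
        + ENNReal.ofReal (2 * |t| * ‖ψ‖)) ∧
    ((∑' m : Fin d → ℤ, ENNReal.ofReal (((m j : ℝ)) ^ 2 * ‖ψ m‖ ^ 2)) < ⊤ →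
      ∀ s : ℝ, (∑' m : Fin d → ℤ,
        ENNReal.ofReal (((m j : ℝ)) ^ 2 * ‖timeEvol H s ψ m‖ ^ 2)) < ⊤) :=
  ballistic_upper_bound_discrete_general d V H hH j ψ t
end
end
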